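/- arXiv:2510.26618 — 3 statements merged into one kernel-verified Lean document; each statement's English description precedes it below -/
import Mathlib

section
/- Let φ and φ' be symmetric bilinear forms on ℝ^{n+1} whose projective zero sets define the same quadric Q in RP^n. If the signature of φ contains at least one + and at least one −, then φ' = λφ for some nonzero real λ. -/
private lemma quad_key {V : Type*} [AddCommGroup V] [Module ℝ V]
    (φ φ' : V →ₗ[ℝ] V →ₗ[ℝ] ℝ)
    (hsym : ∀ x y, φ x y = φ y x) (hsym' : ∀ x y, φ' x y = φ' y x)
    (hsame : ∀ x, φ x x = 0 ↔ φ' x x = 0)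
    (a b : V) (ha : 0 < φ a a) (hb : φ b b < 0) :
    φ' a a * φ b b = φ a a * φ' b b := by
  set A := φ a a; set B := φ a b; set C := φ b b
  set A' := φ' a a; set B' := φ' a b; set C' := φ' b b
  have hD : 0 < B ^ 2 - A * C := by nlinarith
  set s := Real.sqrt (B ^ 2 - A * C) with hs_def
  have hs2 : s ^ 2 = B ^ 2 - A * C := Real.sq_sqrt hD.le
  have hspos : 0 < s := Real.sqrt_pos.mpr hD
  have hC : C ≠ 0 := hb.ne
  -- the two vectors on the quadric
  have hw : ∀ t : ℝ, (t ^ 2 = B ^ 2 - A * C) →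
      φ' (C • a + (-B + t) • b) (C • a + (-B + t) • b) =
        C ^ 2 * A' + 2 * (C * (-B + t)) * B' + (-B + t) ^ 2 * C' ∧
      C ^ 2 * A' + 2 * (C * (-B + t)) * B' + (-B + t) ^ 2 * C' = 0 := by
    intro t ht
    have hexp : φ (C • a + (-B + t) • b) (C • a + (-B + t) • b) =
        C ^ 2 * A + 2 * (C * (-B + t)) * B + (-B + t) ^ 2 * C := by
      simp only [map_add, map_smul, LinearMap.add_apply, LinearMap.smul_apply,
        smul_eq_mul]
      linear_combination (C * (-B + t)) * hsym b a
    have hzero : φ (C • a + (-B + t) • b) (C • a + (-B + t) • b) = 0 := by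
      rw [hexp]; linear_combination C * ht
    have h' := (hsame _).mp hzero
    constructor
    · simp only [map_add, map_smul, LinearMap.add_apply, LinearMap.smul_apply,
        smul_eq_mul]
      linear_combination (C * (-B + t)) * hsym' b a
    · have hexp' : φ' (C • a + (-B + t) • b) (C • a + (-B + t) • b) =
          C ^ 2 * A' + 2 * (C * (-B + t)) * B' + (-B + t) ^ 2 * C' := by
        simp only [map_add, map_smul, LinearMap.add_apply, LinearMap.smul_apply,
          smul_eq_mul]
        linear_combination (C * (-B + t)) * hsym' b a
      rw [← hexp', h']
  obtain ⟨-, E1⟩ := hw s hs2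
  obtain ⟨-, E2⟩ := hw (-s) (by rw [neg_pow]; simpa using hs2)
  have hB' : C * B' = B * C' := by
    have h4 : 4 * s * (C * B' - B * C') = 0 := by linear_combination E1 - E2
    have := mul_eq_zero.mp h4
    rcases this with h | h
    · exact absurd h (by positivity)
    · linarith
  have hfin : C * (C * A' - A * C') = 0 := by
    linear_combination (E1 + E2) / 2 + 2 * B * hB' - C' * hs2
  rcases mul_eq_zero.mp hfin with h | h
  · exact absurd h hC
  · linarith
/-- Two symmetric bilinear forms on ℝ^{n+1} with the same projective quadric,
where the first has at least one `+` and one `-` in its signature (witnessed by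
vectors of positive and negative value), are proportional by a nonzero scalar. -/
theorem stmt_0 (n : ℕ)
    (φ φ' : (Fin (n + 1) → ℝ) →ₗ[ℝ] (Fin (n + 1) → ℝ) →ₗ[ℝ] ℝ)
    (hsym : ∀ x y, φ x y = φ y x) (hsym' : ∀ x y, φ' x y = φ' y x)
    (hplus : ∃ u, 0 < φ u u) (hminus : ∃ v, φ v v < 0)
    (hsame : ∀ x, φ x x = 0 ↔ φ' x x = 0) :
    ∃ l : ℝ, l ≠ 0 ∧ φ' = l • φ := by
  obtain ⟨u, hu⟩ := hplus
  obtain ⟨v, hv⟩ := hminus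
  have huv := quad_key φ φ' hsym hsym' hsame u v hu hv
  have hu0 : φ u u ≠ 0 := hu.ne'
  have hv0 : φ v v ≠ 0 := hv.ne
  refine ⟨φ' u u / φ u u, ?_, ?_⟩
  · intro h
    have h1 : φ' u u = 0 := by
      field_simp at h; simpa using h
    have : φ u u = 0 := (hsame u).mpr h1
    exact hu0 this
  · have hdiag : ∀ x, φ' x x * φ u u = φ x x * φ' u u := by
      intro x
      rcases lt_trichotomy (φ x x) 0 with hx | hx | hx
      · have := quad_key φ φ' hsym hsym' hsame u x hu hx
        linarith [this]
      · have h1 : φ' x x = 0 := (hsame x).mp hx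
        rw [h1, hx]; ring
      · have hxv := quad_key φ φ' hsym hsym' hsame x v hx hv
        -- φ' x x * φ v v = φ x x * φ' v v ; huv : φ' u u * φ v v = φ u u * φ' v v
        have h2 : (φ' x x * φ u u - φ x x * φ' u u) * φ v v = 0 := by
          linear_combination φ u u * hxv - φ x x * huv
        rcases mul_eq_zero.mp h2 with h | h
        · linarith
        · exact absurd h hv0
    refine LinearMap.ext fun x => LinearMap.ext fun y => ?_
    simp only [LinearMap.smul_apply, smul_eq_mul]
    have e := hdiag (x + y)
    simp only [map_add, LinearMap.add_apply] at e
    have hx := hdiag x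
    have hy := hdiag y
    have key : φ' x y * φ u u = φ x y * φ' u u := by
      linear_combination (e - hx - hy) / 2 + (φ u u / 2) * hsym' x y
        - (φ' u u / 2) * hsym x y
    field_simp
    linear_combination key
end

section
/- Let γ : ℤ → RP^n be a discrete curve whose osculating spaces C_k(j) := span of γ(j),…,γ(j+k) have dimension k for all 0 ≤ k ≤ n (γ is generic). Then for all j and all k, ℓ with ℓ ≤ k+1 ≤ n, the intersection ∩_{b=0}^{ℓ} C_k(j+b) equals C_{k−ℓ}(j+ℓ); in particular this intersection has dimension k−ℓ. -/
open Submodule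

/-- Intersection of spans of images of a linearly independent family. -/
lemma span_image_inf_span_image {ι V : Type*} [AddCommGroup V] [Module ℝ V]
    {v : ι → V} (hv : LinearIndependent ℝ v) (S T : Set ι) :
    span ℝ (v '' S) ⊓ span ℝ (v '' T) = span ℝ (v '' (S ∩ T)) := by
  refine le_antisymm ?_ (le_inf (span_mono (Set.image_mono Set.inter_subset_left))
    (span_mono (Set.image_mono Set.inter_subset_right)))
  rintro x ⟨hxS, hxT⟩
  have hx : x ∈ span ℝ (v '' (S ∩ T)) ⊔ span ℝ (v '' (S \ T)) := by
    rw [← span_union, ← Set.image_union, Set.inter_union_diff]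
    exact hxS
  rcases mem_sup.1 hx with ⟨a, ha, b, hb, hab⟩
  have hbT : b ∈ span ℝ (v '' T) := by
    have : b = x - a := by rw [← hab]; abel
    rw [this]
    exact sub_mem hxT (span_mono (Set.image_mono Set.inter_subset_right) ha)
  have hdisj : Disjoint (span ℝ (v '' (S \ T))) (span ℝ (v '' T)) :=
    hv.disjoint_span_image (Set.disjoint_sdiff_left)
  have hb0 : b = 0 := (Submodule.disjoint_def.1 hdisj) b hb hbT
  rw [← hab, hb0, add_zero]
  exact ha

/-- Intersection of spans of images of subsets of a window on which the
family is linearly independent. -/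
lemma span_inter_of_indep {V : Type*} [AddCommGroup V] [Module ℝ V]
    {v : ℤ → V} {W : Set ℤ} (hv : LinearIndependent ℝ (fun b : W => v b))
    {S T : Set ℤ} (hS : S ⊆ W) (hT : T ⊆ W) :
    span ℝ (v '' S) ⊓ span ℝ (v '' T) = span ℝ (v '' (S ∩ T)) := by
  have himg : ∀ U : Set ℤ, U ⊆ W →
      (fun b : W => v b) '' (((↑) : W → ℤ) ⁻¹' U) = v '' U := by
    intro U hU
    have : (fun b : W => v b) '' (((↑) : W → ℤ) ⁻¹' U)
        = v '' (((↑) : W → ℤ) '' (((↑) : W → ℤ) ⁻¹' U)) := by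
      rw [Set.image_image]
    rw [this, Subtype.image_preimage_coe, Set.inter_eq_right.2 hU]
  have := span_image_inf_span_image hv (((↑) : W → ℤ) ⁻¹' S) (((↑) : W → ℤ) ⁻¹' T)
  rwa [himg S hS, himg T hT, ← Set.preimage_inter,
    himg (S ∩ T) (Set.inter_subset_left.trans hS)] at this

/-- The osculating space `C_k(j)` of a discrete curve, as a linear subspace of
ℝ^{n+1}: the span of the points γ(j), …, γ(j+k).  For `k < 0` it is `⊥`
(the empty projective subspace). -/
def osc {m : ℕ} (γ : ℤ → (Fin m → ℝ)) (k j : ℤ) : Submodule ℝ (Fin m → ℝ) :=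
  Submodule.span ℝ {v | ∃ b : ℤ, 0 ≤ b ∧ b ≤ k ∧ v = γ (j + b)}

lemma osc_eq {m : ℕ} (γ : ℤ → (Fin m → ℝ)) (k j : ℤ) :
    osc γ k j = span ℝ (γ '' Set.Icc j (j + k)) := by
  unfold osc
  congr 1
  ext v
  simp only [Set.mem_setOf_eq, Set.mem_image, Set.mem_Icc]
  constructor
  · rintro ⟨b, h0, hk, rfl⟩
    exact ⟨j + b, ⟨by omega, by omega⟩, rfl⟩
  · rintro ⟨x, ⟨h1, h2⟩, rfl⟩
    exact ⟨x - j, by omega, by omega, by rw [add_sub_cancel]⟩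

lemma indep_of_gen {n : ℕ} {γ : ℤ → (Fin (n + 1) → ℝ)}
    (hgen : ∀ k j : ℤ, 0 ≤ k → k ≤ n →
      Module.finrank ℝ ↥(osc γ k j) = k.toNat + 1)
    {K J : ℤ} (h0 : 0 ≤ K) (hn : K ≤ n) :
    LinearIndependent ℝ (fun b : (Set.Icc J (J + K)) => γ b) := by
  rw [linearIndependent_iff_card_eq_finrank_span]
  have hrange : Set.range (fun b : (Set.Icc J (J + K)) => γ b)
      = γ '' Set.Icc J (J + K) := (Set.image_eq_range _ _).symm
  rw [Set.finrank, hrange, ← osc_eq, hgen K J h0 hn]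
  have := Int.card_fintype_Icc_of_le (a := J) (b := J + K) (by omega)
  omega

/-- For a generic discrete curve in RP^n (all osculating spaces `C_k(j)` of
projective dimension `k`, i.e. linear dimension `k+1`), for all `ℓ ≤ k+1 ≤ n`
the intersection `⋂_{b=0}^{ℓ} C_k(j+b)` equals `C_{k-ℓ}(j+ℓ)`. -/
theorem stmt_7 (n : ℕ) (γ : ℤ → (Fin (n + 1) → ℝ))
    (hgen : ∀ k j : ℤ, 0 ≤ k → k ≤ n →
      Module.finrank ℝ ↥(osc γ k j) = k.toNat + 1) :
    ∀ j k ℓ : ℤ, 0 ≤ k → 0 ≤ ℓ → ℓ ≤ k + 1 → k + 1 ≤ n →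
      (⨅ b ∈ Finset.Icc (0 : ℤ) ℓ, osc γ k (j + b)) = osc γ (k - ℓ) (j + ℓ) := by
  have main : ∀ ℓ : ℤ, 0 ≤ ℓ → ∀ j k : ℤ, 0 ≤ k → ℓ ≤ k + 1 → k + 1 ≤ n →
      (⨅ b ∈ Finset.Icc (0 : ℤ) ℓ, osc γ k (j + b)) = osc γ (k - ℓ) (j + ℓ) := by
    refine Int.le_induction ?_ ?_
    · intro j k hk _ _
      simp
    · intro ℓ hℓ IH j k hk hlk hkn
      have hIcc : Finset.Icc (0 : ℤ) (ℓ + 1) = insert (ℓ + 1) (Finset.Icc (0 : ℤ) ℓ) := by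
        ext x; simp [Finset.mem_Icc]; omega
      rw [hIcc, Finset.iInf_insert, inf_comm,
        IH j k hk (by omega) hkn]
      -- independence on the window [j+ℓ, j+ℓ+k+1]
      have hindep := indep_of_gen hgen (K := k + 1) (J := j + ℓ) (by omega) (by exact_mod_cast hkn)
      have h1 : osc γ (k - ℓ) (j + ℓ) = span ℝ (γ '' Set.Icc (j + ℓ) (j + k)) := by
        rw [osc_eq, show j + ℓ + (k - ℓ) = j + k from by ring]
      have h2 : osc γ k (j + (ℓ + 1)) = span ℝ (γ '' Set.Icc (j + ℓ + 1) (j + ℓ + 1 + k)) := by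
        rw [osc_eq, show j + (ℓ + 1) = j + ℓ + 1 from by ring]
      have h3 : osc γ (k - (ℓ + 1)) (j + (ℓ + 1))
          = span ℝ (γ '' Set.Icc (j + ℓ + 1) (j + k)) := by
        rw [osc_eq, show j + (ℓ + 1) = j + ℓ + 1 from by ring,
          show j + ℓ + 1 + (k - (ℓ + 1)) = j + k from by ring]
      rw [h1, h2, h3]
      have hS : Set.Icc (j + ℓ) (j + k) ⊆ Set.Icc (j + ℓ) (j + ℓ + (k + 1)) := by
        intro x hx; simp only [Set.mem_Icc] at *; omega
      have hT : Set.Icc (j + ℓ + 1) (j + ℓ + 1 + k) ⊆ Set.Icc (j + ℓ) (j + ℓ + (k + 1)) := by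
        intro x hx; simp only [Set.mem_Icc] at *; omega
      rw [span_inter_of_indep hindep hS hT,
        show Set.Icc (j + ℓ) (j + k) ∩ Set.Icc (j + ℓ + 1) (j + ℓ + 1 + k)
          = Set.Icc (j + ℓ + 1) (j + k) from by
            ext x; simp only [Set.mem_Icc, Set.mem_inter_iff]; omega]
  intro j k ℓ hk hℓ hlk hkn
  exact main ℓ hℓ j k hk hlk hkn
end

section
/- Let φ be a symmetric bilinear form on ℝ^{n+1}. If U ≤ ℝ^{n+1} has dim U = m+1, and U contains two distinct totally isotropic m-dimensional subspaces W_1 ≠ W_2 (i.e. φ(x,y)=0 for all x,y ∈ W_i) and a vector v ∈ U with v ∉ W_1 ∪ W_2 and φ(v,v) = 0, then U is totally isotropic. -/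
/-- If a subspace `U` of dimension `m+1` contains two distinct totally
isotropic `m`-dimensional subspaces `W₁ ≠ W₂` and an isotropic vector `v`
outside `W₁ ∪ W₂`, then `U` is totally isotropic. -/
theorem stmt_11 (n m : ℕ)
    (φ : (Fin (n + 1) → ℝ) →ₗ[ℝ] (Fin (n + 1) → ℝ) →ₗ[ℝ] ℝ)
    (hsym : ∀ x y, φ x y = φ y x)
    (U W₁ W₂ : Submodule ℝ (Fin (n + 1) → ℝ))
    (hW₁U : W₁ ≤ U) (hW₂U : W₂ ≤ U) (hW : W₁ ≠ W₂)
    (hUdim : Module.finrank ℝ ↥U = m + 1)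
    (hW₁dim : Module.finrank ℝ ↥W₁ = m) (hW₂dim : Module.finrank ℝ ↥W₂ = m)
    (hW₁iso : ∀ x ∈ W₁, ∀ y ∈ W₁, φ x y = 0)
    (hW₂iso : ∀ x ∈ W₂, ∀ y ∈ W₂, φ x y = 0)
    (v : Fin (n + 1) → ℝ) (hvU : v ∈ U) (hv₁ : v ∉ W₁) (hv₂ : v ∉ W₂)
    (hviso : φ v v = 0) :
    ∀ x ∈ U, ∀ y ∈ U, φ x y = 0 := by
  -- W ⊔ span v = U for W ∈ {W₁, W₂}
  have hsup : ∀ (W : Submodule ℝ (Fin (n + 1) → ℝ)), W ≤ U →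
      Module.finrank ℝ ↥W = m → v ∉ W → W ⊔ (ℝ ∙ v) = U := by
    intro W hWU hWdim hvW
    have hle : W ⊔ (ℝ ∙ v) ≤ U := sup_le hWU (by
      rw [Submodule.span_le, Set.singleton_subset_iff]; exact hvU)
    have hlt : W < W ⊔ (ℝ ∙ v) := by
      refine lt_of_le_of_ne le_sup_left ?_
      intro h
      exact hvW (h ▸ (le_sup_right : (ℝ ∙ v) ≤ W ⊔ (ℝ ∙ v)) (Submodule.mem_span_singleton_self v))
    have h1 : Module.finrank ℝ ↥W < Module.finrank ℝ ↥(W ⊔ (ℝ ∙ v)) :=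
      Submodule.finrank_lt_finrank_of_lt hlt
    have h2 : Module.finrank ℝ ↥(W ⊔ (ℝ ∙ v)) ≤ Module.finrank ℝ ↥U :=
      Submodule.finrank_mono hle
    exact Submodule.eq_of_le_of_finrank_eq hle (by omega)
  have hU1 := hsup W₁ hW₁U hW₁dim hv₁
  have hU2 := hsup W₂ hW₂U hW₂dim hv₂
  have hdec : ∀ (W : Submodule ℝ (Fin (n + 1) → ℝ)), W ⊔ (ℝ ∙ v) = U →
      ∀ x ∈ U, ∃ a ∈ W, ∃ t : ℝ, x = a + t • v := by
    intro W hWv x hx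
    rw [← hWv, Submodule.mem_sup] at hx
    obtain ⟨a, ha, b, hb, hab⟩ := hx
    obtain ⟨t, rfl⟩ := Submodule.mem_span_singleton.mp hb
    exact ⟨a, ha, t, hab.symm⟩
  -- W₁ ⊔ W₂ = U, so v = w₁ + w₂
  have hUW : W₁ ⊔ W₂ = U := by
    have hle : W₁ ⊔ W₂ ≤ U := sup_le hW₁U hW₂U
    have hlt : W₁ < W₁ ⊔ W₂ := by
      refine lt_of_le_of_ne le_sup_left ?_
      intro h
      exact hW ((Submodule.eq_of_le_of_finrank_eq (h ▸ le_sup_right)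
        (by omega)).symm)
    have h1 : Module.finrank ℝ ↥W₁ < Module.finrank ℝ ↥(W₁ ⊔ W₂) :=
      Submodule.finrank_lt_finrank_of_lt hlt
    have h2 : Module.finrank ℝ ↥(W₁ ⊔ W₂) ≤ Module.finrank ℝ ↥U :=
      Submodule.finrank_mono hle
    exact Submodule.eq_of_le_of_finrank_eq hle (by omega)
  obtain ⟨w₁, hw₁, w₂, hw₂, hv⟩ : ∃ a ∈ W₁, ∃ b ∈ W₂, a + b = v := by
    rw [← hUW, Submodule.mem_sup] at hvU; exact hvU
  -- φ w₁ w₂ = 0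
  have h12 : φ w₁ w₂ = 0 := by
    have := hviso
    rw [← hv] at this
    simp only [map_add, LinearMap.add_apply] at this
    rw [hW₁iso w₁ hw₁ w₁ hw₁, hW₂iso w₂ hw₂ w₂ hw₂, hsym w₂ w₁] at this
    linarith
  -- φ w₁ y = 0 for y ∈ W₂
  have hc1 : ∀ y ∈ W₂, φ w₁ y = 0 := by
    intro y hy
    obtain ⟨z, hz, c, rfl⟩ := hdec W₁ hU1 y (hW₂U hy)
    have h1 : φ w₁ z = 0 := hW₁iso w₁ hw₁ z hz
    have h2 : φ w₁ v = 0 := by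
      rw [← hv, map_add, hW₁iso w₁ hw₁ w₁ hw₁, h12]; ring
    simp [h1, h2]
  -- φ w₂ x = 0 for x ∈ W₁
  have hc2 : ∀ x ∈ W₁, φ w₂ x = 0 := by
    intro x hx
    obtain ⟨z, hz, c, rfl⟩ := hdec W₂ hU2 x (hW₁U hx)
    have h1 : φ w₂ z = 0 := hW₂iso w₂ hw₂ z hz
    have h2 : φ w₂ v = 0 := by
      rw [← hv, map_add, hW₂iso w₂ hw₂ w₂ hw₂, hsym w₂ w₁, h12]; ring
    simp [h1, h2]
  -- φ a v = 0 for a ∈ W₁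
  have hav : ∀ a ∈ W₁, φ a v = 0 := by
    intro a ha
    rw [← hv, map_add, hW₁iso a ha w₁ hw₁, hsym a w₂, hc2 a ha]; ring
  intro x hx y hy
  obtain ⟨a, ha, s, rfl⟩ := hdec W₁ hU1 x hx
  obtain ⟨b, hb, t, rfl⟩ := hdec W₁ hU1 y hy
  simp only [map_add, map_smul, LinearMap.add_apply, LinearMap.smul_apply,
    smul_eq_mul]
  rw [hW₁iso a ha b hb, hav a ha, hsym v b, hav b hb, hviso]
  ring
end
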